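/- Let $(\Omega, d)$ be a finite metric space, $P$ a stochastic matrix, and $p \in [1,\infty)$. If $W_p(\delta_x P, \delta_y P) \leq (1-K)d(x,y)$ for all $x, y \in \Omega$, then for any probability measures $\mu, \nu$ on $\Omega$ and any $n \geq 0$, $W_p(\mu P^n, \nu P^n) \leq (1-K)^n W_p(\mu, \nu)$, where $K \leq 1$. -/

import Mathlib

/-!
Glue a near-optimal coupling `Γ` of `μ, ν` with near-optimal couplings `G x y` of the rows
`P x, P y`: the plan `∑ x y, Γ x y • G x y` couples `μ P` and `ν P`, and its `p`-cost is at most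
`∑ x y, Γ x y (1 - K)^p d(x, y)^p`, i.e. `(1 - K)^p` times the cost of `Γ`. Hence one step of the
chain contracts `W_p` by the factor `1 - K`, and iterating gives the claim.
-/

open Finset

namespace DiscreteTransport

variable {Ω : Type*} [Fintype Ω]

def IsProbVec (μ : Ω → ℝ) : Prop := (∀ x, 0 ≤ μ x) ∧ ∑ x, μ x = 1

def IsStochastic (P : Ω → Ω → ℝ) : Prop := (∀ x y, 0 ≤ P x y) ∧ ∀ x, ∑ y, P x y = 1

def markovStep (P : Ω → Ω → ℝ) (ρ : Ω → ℝ) : Ω → ℝ := fun w => ∑ v, ρ v * P v w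

def IsCoupling (μ ν : Ω → ℝ) (Γ : Ω → Ω → ℝ) : Prop :=
  (∀ v w, 0 ≤ Γ v w) ∧ (∀ v, ∑ w, Γ v w = μ v) ∧ (∀ w, ∑ v, Γ v w = ν w)

def transportCost (c Γ : Ω → Ω → ℝ) : ℝ := ∑ v, ∑ w, Γ v w * c v w

-- Junk value `0` when `μ, ν` admit no coupling.
noncomputable def optimalCost (c : Ω → Ω → ℝ) (μ ν : Ω → ℝ) : ℝ :=
  ⨅ Γ : {Γ // IsCoupling μ ν Γ}, transportCost c Γ.1

def glue (Γ : Ω → Ω → ℝ) (G : Ω → Ω → Ω → Ω → ℝ) : Ω → Ω → ℝ :=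
  fun v w => ∑ x, ∑ y, Γ x y * G x y v w

variable {P : Ω → Ω → ℝ} {μ ν ρ : Ω → ℝ} {c Γ : Ω → Ω → ℝ}

theorem IsStochastic.isProbVec_row (hP : IsStochastic P) (x : Ω) : IsProbVec (P x) :=
  ⟨hP.1 x, hP.2 x⟩

theorem IsProbVec.markovStep (hP : IsStochastic P) (hρ : IsProbVec ρ) :
    IsProbVec (markovStep P ρ) := by
  refine ⟨fun w => sum_nonneg fun v _ => mul_nonneg (hρ.1 v) (hP.1 v w), ?_⟩
  show ∑ w, ∑ v, ρ v * P v w = 1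
  rw [sum_comm]
  simp only [← mul_sum, hP.2, mul_one, hρ.2]

theorem isCoupling_prod (hμ : IsProbVec μ) (hν : IsProbVec ν) :
    IsCoupling μ ν fun v w => μ v * ν w :=
  ⟨fun v w => mul_nonneg (hμ.1 v) (hν.1 w), fun v => by rw [← mul_sum, hν.2, mul_one],
    fun w => by rw [← sum_mul, hμ.2, one_mul]⟩

theorem IsCoupling.glue {G : Ω → Ω → Ω → Ω → ℝ} (hΓ : IsCoupling μ ν Γ)
    (hG : ∀ x y, IsCoupling (P x) (P y) (G x y)) :
    IsCoupling (markovStep P μ) (markovStep P ν) (DiscreteTransport.glue Γ G) := by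
  refine ⟨fun v w => sum_nonneg fun x _ => sum_nonneg fun y _ =>
    mul_nonneg (hΓ.1 x y) ((hG x y).1 v w), fun v => ?_, fun w => ?_⟩
  · calc ∑ w, DiscreteTransport.glue Γ G v w = ∑ x, ∑ y, Γ x y * ∑ w, G x y v w := by
          simp only [DiscreteTransport.glue, mul_sum]
          exact sum_comm_cycle.symm
      _ = markovStep P μ v := by
          simp only [(hG _ _).2.1, ← sum_mul, hΓ.2.1]
          rfl
  · calc ∑ v, DiscreteTransport.glue Γ G v w = ∑ x, ∑ y, Γ x y * ∑ v, G x y v w := by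
          simp only [DiscreteTransport.glue, mul_sum]
          exact sum_comm_cycle.symm
      _ = ∑ y, (∑ x, Γ x y) * P y w := by
          simp only [(hG _ _).2.2, sum_mul]
          exact sum_comm
      _ = markovStep P ν w := by
          simp only [hΓ.2.2]
          rfl

theorem transportCost_nonneg (hc : ∀ v w, 0 ≤ c v w) (hΓ : ∀ v w, 0 ≤ Γ v w) :
    0 ≤ transportCost c Γ :=
  sum_nonneg fun v _ => sum_nonneg fun w _ => mul_nonneg (hΓ v w) (hc v w)

theorem transportCost_const_mul (a : ℝ) :
    transportCost (fun v w => a * c v w) Γ = a * transportCost c Γ := by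
  simp only [transportCost, mul_sum, mul_left_comm]

theorem transportCost_glue (G : Ω → Ω → Ω → Ω → ℝ) :
    transportCost c (glue Γ G) = ∑ x, ∑ y, Γ x y * transportCost c (G x y) := by
  simp only [transportCost, glue, sum_mul, mul_sum, mul_assoc]
  exact sum_comm_cycle.trans (sum_congr rfl fun x _ => sum_comm_cycle)

theorem optimalCost_nonneg (hc : ∀ v w, 0 ≤ c v w) : 0 ≤ optimalCost c μ ν :=
  Real.iInf_nonneg fun Γ => transportCost_nonneg hc Γ.2.1

theorem optimalCost_le (hc : ∀ v w, 0 ≤ c v w) (hΓ : IsCoupling μ ν Γ) :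
    optimalCost c μ ν ≤ transportCost c Γ :=
  ciInf_le (f := fun Γ : {Γ // IsCoupling μ ν Γ} => transportCost c Γ.1)
    ⟨0, Set.forall_mem_range.2 fun Γ' => transportCost_nonneg hc Γ'.2.1⟩ ⟨Γ, hΓ⟩

theorem exists_isCoupling_transportCost_lt (hμ : IsProbVec μ) (hν : IsProbVec ν) {ε : ℝ}
    (hε : 0 < ε) : ∃ Γ, IsCoupling μ ν Γ ∧ transportCost c Γ < optimalCost c μ ν + ε := by
  have : Nonempty {Γ // IsCoupling μ ν Γ} := ⟨⟨_, isCoupling_prod hμ hν⟩⟩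
  obtain ⟨Γ, hΓ⟩ := exists_lt_of_ciInf_lt (lt_add_of_pos_right (optimalCost c μ ν) hε)
  exact ⟨Γ.1, Γ.2, hΓ⟩

theorem sInf_costs_eq_optimalCost :
    sInf {r : ℝ | ∃ Γ : Ω → Ω → ℝ, (∀ v w, 0 ≤ Γ v w) ∧ (∀ v, ∑ w, Γ v w = μ v) ∧
      (∀ w, ∑ v, Γ v w = ν w) ∧ r = ∑ v, ∑ w, Γ v w * c v w} = optimalCost c μ ν := by
  rw [optimalCost, iInf]
  congr 1
  ext r
  simp [IsCoupling, transportCost, and_assoc, eq_comm]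

theorem optimalCost_markovStep_le_transportCost {b : Ω → Ω → ℝ} (hc : ∀ v w, 0 ≤ c v w)
    (hP : IsStochastic P) (hb : ∀ x y, optimalCost c (P x) (P y) ≤ b x y)
    (hΓ : IsCoupling μ ν Γ) :
    optimalCost c (markovStep P μ) (markovStep P ν) ≤ transportCost b Γ := by
  set m := ∑ x, ∑ y, Γ x y
  have hm : 0 ≤ m := sum_nonneg fun x _ => sum_nonneg fun y _ => hΓ.1 x y
  refine le_of_forall_pos_le_add fun ε hε => ?_
  set δ := ε / (m + 1)
  have hmδ : m * δ ≤ ε := by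
    rw [mul_div_assoc', div_le_iff₀ (by linarith)]
    nlinarith
  choose G hG hGcost using fun x y =>
    exists_isCoupling_transportCost_lt (c := c) (hP.isProbVec_row x) (hP.isProbVec_row y)
      (show 0 < δ by positivity)
  calc optimalCost c (markovStep P μ) (markovStep P ν)
      ≤ transportCost c (glue Γ G) := optimalCost_le hc (hΓ.glue hG)
    _ = ∑ x, ∑ y, Γ x y * transportCost c (G x y) := transportCost_glue G
    _ ≤ ∑ x, ∑ y, Γ x y * (b x y + δ) := by
        gcongr with x _ y _
        · exact hΓ.1 x y
        · linarith [hGcost x y, hb x y]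
    _ = transportCost b Γ + m * δ := by
        simp only [transportCost, mul_add, sum_add_distrib, m, sum_mul]
    _ ≤ transportCost b Γ + ε := by linarith

theorem optimalCost_markovStep_le_mul {a : ℝ} (hc : ∀ v w, 0 ≤ c v w) (hP : IsStochastic P)
    (ha : 0 ≤ a) (hrow : ∀ x y, optimalCost c (P x) (P y) ≤ a * c x y)
    (hμ : IsProbVec μ) (hν : IsProbVec ν) :
    optimalCost c (markovStep P μ) (markovStep P ν) ≤ a * optimalCost c μ ν := by
  have : Nonempty {Γ // IsCoupling μ ν Γ} := ⟨⟨_, isCoupling_prod hμ hν⟩⟩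
  calc optimalCost c (markovStep P μ) (markovStep P ν)
      ≤ ⨅ Γ : {Γ // IsCoupling μ ν Γ}, a * transportCost c Γ.1 := le_ciInf fun Γ => by
        rw [← transportCost_const_mul]
        exact optimalCost_markovStep_le_transportCost hc hP hrow Γ.2
    _ = a * optimalCost c μ ν := (Real.mul_iInf_of_nonneg ha _).symm

end DiscreteTransport

theorem Real.rpow_inv_le_mul_rpow_inv {s t a p : ℝ} (hs : 0 ≤ s) (ht : 0 ≤ t) (ha : 0 ≤ a)
    (hp : 0 < p) (h : t ≤ a ^ p * s) : t ^ p⁻¹ ≤ a * s ^ p⁻¹ :=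
  calc t ^ p⁻¹ ≤ (a ^ p * s) ^ p⁻¹ := Real.rpow_le_rpow ht h (inv_nonneg.2 hp.le)
    _ = a * s ^ p⁻¹ := by
      rw [Real.mul_rpow (Real.rpow_nonneg ha p) hs, Real.rpow_rpow_inv ha hp.ne']

theorem Set.MapsTo.apply_iterate_le_pow_mul {α : Type*} {f : α → α} {S : Set α}
    (hS : Set.MapsTo f S S) {D : α → α → ℝ} {L : ℝ} (hL : 0 ≤ L)
    (hf : ∀ a ∈ S, ∀ b ∈ S, D (f a) (f b) ≤ L * D a b) {a b : α} (ha : a ∈ S) (hb : b ∈ S)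
    (n : ℕ) : D (f^[n] a) (f^[n] b) ≤ L ^ n * D a b := by
  induction n with
  | zero => simp
  | succ n ih =>
    rw [Function.iterate_succ_apply', Function.iterate_succ_apply', pow_succ', mul_assoc]
    exact (hf _ (hS.iterate n ha) _ (hS.iterate n hb)).trans (mul_le_mul_of_nonneg_left ih hL)

open DiscreteTransport in
theorem stmt15_general {Ω : Type*} [Fintype Ω]
    (d : Ω → Ω → ℝ)
    (hd_nonneg : ∀ x y, 0 ≤ d x y)
    (P : Ω → Ω → ℝ)
    (hP : (∀ x y, 0 ≤ P x y) ∧ ∀ x, ∑ y, P x y = 1)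
    (p : ℝ) (hp : 1 ≤ p)
    (W : (Ω → ℝ) → (Ω → ℝ) → ℝ)
    (hW : ∀ μ ν, W μ ν = (sInf {r : ℝ | ∃ Γ : Ω → Ω → ℝ,
      (∀ v w, 0 ≤ Γ v w) ∧ (∀ v, ∑ w, Γ v w = μ v) ∧ (∀ w, ∑ v, Γ v w = ν w) ∧
      r = ∑ v, ∑ w, Γ v w * d v w ^ p}) ^ (1 / p))
    (K : ℝ) (hK1 : K ≤ 1)
    (hK : ∀ x y : Ω, W (fun v => P x v) (fun v => P y v) ≤ (1 - K) * d x y)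
    (μ ν : Ω → ℝ)
    (hμ : (∀ x, 0 ≤ μ x) ∧ ∑ x, μ x = 1)
    (hν : (∀ x, 0 ≤ ν x) ∧ ∑ x, ν x = 1)
    (step : (Ω → ℝ) → (Ω → ℝ))
    (hstep : ∀ ρ, step ρ = fun w => ∑ v, ρ v * P v w) :
    ∀ n : ℕ, W (step^[n] μ) (step^[n] ν) ≤ (1 - K) ^ n * W μ ν := by
  set c : Ω → Ω → ℝ := fun x y => d x y ^ p
  have hp0 : 0 < p := one_pos.trans_le hp
  have h1K : 0 ≤ 1 - K := by linarith
  have hc : ∀ x y, 0 ≤ c x y := fun x y => Real.rpow_nonneg (hd_nonneg x y) p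
  have hWc : ∀ μ ν, W μ ν = optimalCost c μ ν ^ p⁻¹ := fun μ ν => by
    rw [hW, sInf_costs_eq_optimalCost, one_div]
  have hrow : ∀ x y, optimalCost c (P x) (P y) ≤ (1 - K) ^ p * c x y := fun x y => by
    rw [← Real.mul_rpow h1K (hd_nonneg x y), ← Real.rpow_inv_le_iff_of_pos (optimalCost_nonneg hc)
      (mul_nonneg h1K (hd_nonneg x y)) hp0, ← hWc]
    exact hK x y
  obtain rfl : step = markovStep P := funext hstep
  refine Set.MapsTo.apply_iterate_le_pow_mul (S := {ρ | IsProbVec ρ})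
    (fun ρ hρ => IsProbVec.markovStep hP hρ) h1K (fun ρ hρ σ hσ => ?_) hμ hν
  rw [hWc, hWc]
  exact Real.rpow_inv_le_mul_rpow_inv (optimalCost_nonneg hc) (optimalCost_nonneg hc) h1K hp0
    (optimalCost_markovStep_le_mul hc hP (Real.rpow_nonneg h1K p) hrow hρ hσ)

theorem stmt15 {Ω : Type*} [Fintype Ω] [Nonempty Ω]
    (d : Ω → Ω → ℝ)
    (hd_nonneg : ∀ x y, 0 ≤ d x y)
    (hd_eq : ∀ x y, d x y = 0 ↔ x = y)
    (hd_symm : ∀ x y, d x y = d y x)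
    (hd_tri : ∀ x y z, d x z ≤ d x y + d y z)
    (P : Ω → Ω → ℝ)
    (hP : (∀ x y, 0 ≤ P x y) ∧ ∀ x, ∑ y, P x y = 1)
    (p : ℝ) (hp : 1 ≤ p)
    (W : (Ω → ℝ) → (Ω → ℝ) → ℝ)
    (hW : ∀ μ ν, W μ ν = (sInf {r : ℝ | ∃ Γ : Ω → Ω → ℝ,
      (∀ v w, 0 ≤ Γ v w) ∧ (∀ v, ∑ w, Γ v w = μ v) ∧ (∀ w, ∑ v, Γ v w = ν w) ∧
      r = ∑ v, ∑ w, Γ v w * d v w ^ p}) ^ (1 / p))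
    (K : ℝ) (hK1 : K ≤ 1)
    (hK : ∀ x y : Ω, W (fun v => P x v) (fun v => P y v) ≤ (1 - K) * d x y)
    (μ ν : Ω → ℝ)
    (hμ : (∀ x, 0 ≤ μ x) ∧ ∑ x, μ x = 1)
    (hν : (∀ x, 0 ≤ ν x) ∧ ∑ x, ν x = 1)
    (step : (Ω → ℝ) → (Ω → ℝ))
    (hstep : ∀ ρ, step ρ = fun w => ∑ v, ρ v * P v w) :
    ∀ n : ℕ, W (step^[n] μ) (step^[n] ν) ≤ (1 - K) ^ n * W μ ν :=
  stmt15_general d hd_nonneg P hP p hp W hW K hK1 hK μ ν hμ hν step hstep
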